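/- arXiv:1102.0672 — 2 statements merged into one kernel-verified Lean document; each statement's English description precedes it below -/
import Mathlib

section
/- Let E be a spectral measure on 𝔅(ℝ) in a Hilbert space H, x_0,…,x_{N-1} ∈ H, and M(δ) = ((E(δ)x_i,x_j))_{i,j}. For a simple ℂ^N-valued function f = Σ_j Σ_{δ∈I_j} α_j(δ) χ_δ e_j, set x_f = Σ_j Σ_{δ∈I_j} α_j(δ) E(δ) x_j ∈ H. Then for any two such simple functions f, g one has (f,g)_{L²(M)} = (x_f, x_g)_H. In particular f ↦ x_f is a well-defined isometry from the span of simple functions in L²(M) into H. -/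
open MeasureTheory Complex Matrix
open scoped ComplexOrder

/-- An `N×N` nonnegative-Hermitian-matrix-valued measure on `𝔅(ℝ)`, encoded through its
trace measure `τ` and the Radon–Nikodym density `Φ = M'_τ`. -/
structure MatrixMeasure (N : ℕ) where
  τ : Measure ℝ
  Φ : ℝ → Matrix (Fin N) (Fin N) ℂ
  meas : ∀ i j, Measurable fun x => Φ x i j
  pos : ∀ x, (Φ x).PosSemidef
  trace_one : ∀ x, (Φ x).trace = 1

/-- The inner product `(f,g) = ∫ f M'_τ g* dτ` of `L²(M)`. -/
noncomputable def MatrixMeasure.pairing {N : ℕ} (M : MatrixMeasure N)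
    (f g : ℝ → Fin N → ℂ) : ℂ :=
  ∫ x, dotProduct (f x) ((M.Φ x) *ᵥ (star (g x))) ∂M.τ

/-- A projection-valued spectral measure on the Borel sets of `α`, acting in `H`. -/
structure PVM (α : Type) [MeasurableSpace α] (H : Type)
    [NormedAddCommGroup H] [InnerProductSpace ℂ H] [CompleteSpace H] where
  P : Set α → H →L[ℂ] H
  empty' : P ∅ = 0
  univ' : P Set.univ = 1
  selfAdjoint' : ∀ δ, MeasurableSet δ → IsSelfAdjoint (P δ)
  inter' : ∀ δ δ', MeasurableSet δ → MeasurableSet δ' → P (δ ∩ δ') = P δ ∘L P δ'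
  countablyAdditive' : ∀ f : ℕ → Set α, (∀ n, MeasurableSet (f n)) →
    Pairwise (Function.onFun Disjoint f) →
    ∀ v : H, HasSum (fun n => P (f n) v) (P (⋃ n, f n) v)

private lemma entry_bound {N : ℕ} (A : Matrix (Fin N) (Fin N) ℂ) (hA : A.PosSemidef)
    (htr : A.trace = 1) (i j : Fin N) : ‖A i j‖ ≤ 1 := by
  have hdiag : ∀ k, (A k k).im = 0 := fun k => by
    have := congrArg Complex.im (hA.isHermitian.apply k k)
    simp [Complex.conj_im] at this
    linarith
  have hdnn : ∀ k, 0 ≤ (A k k).re := fun k => by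
    have hs : (star (Pi.single k 1) : Fin N → ℂ) = Pi.single k 1 := by
      funext p; by_cases hp : p = k <;> simp [Pi.single_apply, hp]
    have := hA.re_dotProduct_nonneg (Pi.single k 1)
    simpa [hs, Matrix.mulVec_single, single_dotProduct] using this
  have hdle : ∀ k, (A k k).re ≤ 1 := fun k => by
    have hsum : ∑ m, (A m m).re = 1 := by
      have := congrArg Complex.re htr
      simpa [Matrix.trace, Matrix.diag, Complex.re_sum] using this
    calc (A k k).re ≤ ∑ m, (A m m).re :=
          Finset.single_le_sum (fun m _ => hdnn m) (Finset.mem_univ k)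
      _ = 1 := hsum
  have hnorm : ∀ k, ‖A k k‖ = (A k k).re := fun k => by
    have h : A k k = ((A k k).re : ℂ) := by apply Complex.ext <;> simp [hdiag k]
    calc ‖A k k‖ = ‖(((A k k).re : ℝ) : ℂ)‖ := by rw [← h]
      _ = |(A k k).re| := by rw [Complex.norm_real, Real.norm_eq_abs]
      _ = (A k k).re := _root_.abs_of_nonneg (hdnn k)
  rcases eq_or_ne i j with rfl | hij
  · rw [hnorm i]; exact hdle i
  · obtain ⟨a, ha⟩ : ∃ a, a = A i j := ⟨_, rfl⟩
    rw [← ha]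
    rcases eq_or_ne a 0 with h0 | h0
    · simp [h0]
    have hrpos : (0:ℝ) < ‖a‖ := norm_pos_iff.2 h0
    have hrne : ((‖a‖ : ℝ) : ℂ) ≠ 0 := by exact_mod_cast hrpos.ne'
    obtain ⟨c, hc⟩ : ∃ c : ℂ, c = -(starRingEnd ℂ a / ‖a‖) := ⟨_, rfl⟩
    have h1 : (starRingEnd ℂ) a * a = ((‖a‖^2 : ℝ) : ℂ) := by
      rw [mul_comm, Complex.mul_conj, Complex.normSq_eq_norm_sq]
    have hca : c * a = -(‖a‖ : ℂ) := by
      rw [hc, neg_mul, div_mul_eq_mul_div, h1, neg_inj]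
      push_cast
      rw [sq]
      field_simp
    have hcca : (starRingEnd ℂ c) * (starRingEnd ℂ a) = -(‖a‖ : ℂ) := by
      have := congrArg (starRingEnd ℂ) hca
      simpa [mul_comm] using this
    have hcc : (starRingEnd ℂ c) * c = 1 := by
      rw [mul_comm, Complex.mul_conj]
      have : Complex.normSq c = 1 := by
        rw [hc, Complex.normSq_neg, map_div₀, Complex.normSq_conj, Complex.normSq_ofReal,
          Complex.normSq_eq_norm_sq, sq]
        field_simp
      rw [this]; norm_num
    obtain ⟨v, hv⟩ : ∃ v : Fin N → ℂ, v = Pi.single i 1 + Pi.single j c := ⟨_, rfl⟩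
    have hsv : star v = Pi.single i 1 + Pi.single j (starRingEnd ℂ c) := by
      funext p
      simp only [hv, Pi.star_apply, Pi.add_apply, star_add]
      by_cases hp : p = i <;> by_cases hq : p = j <;>
        simp [Pi.single_apply, hp, hq, Complex.star_def, apply_ite (starRingEnd ℂ)]
    have hji : A j i = starRingEnd ℂ a := by
      rw [ha, ← hA.isHermitian.apply j i]; rfl
    have hq : star v ⬝ᵥ A *ᵥ v = A i i + A j j - 2*(‖a‖:ℂ) := by
      rw [hsv, hv, Matrix.mulVec_add, Matrix.mulVec_single, Matrix.mulVec_single,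
        add_dotProduct, single_dotProduct, single_dotProduct]
      simp only [Pi.add_apply, Pi.smul_apply, op_smul_eq_mul, Matrix.col_apply, mul_one, one_mul, ← ha, hji]
      linear_combination hca + hcca + A j j * hcc
    have hre := hA.re_dotProduct_nonneg v
    rw [hq] at hre
    have hfin : 0 ≤ (A i i).re + (A j j).re - 2*‖a‖ := by
      simpa [Complex.add_re, Complex.sub_re, Complex.mul_re] using hre
    nlinarith [hdle i, hdle j]

/-- Let `E` be a spectral measure on `𝔅(ℝ)` in `H`, `x_0,…,x_{N-1} ∈ H` and
`M(δ) = ((E(δ)x_i,x_j))`.  For simple functions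
`f = Σ_j Σ_{δ∈I_j} α_j(δ) χ_δ e_j` and `g = Σ_s Σ_{δ'∈J_s} β_s(δ') χ_{δ'} e_s`, setting
`x_f = Σ_j Σ_{δ∈I_j} α_j(δ) E(δ) x_j`, one has `(f,g)_{L²(M)} = (x_f, x_g)_H`, i.e. the map
`f ↦ x_f` is a well-defined isometry on the span of simple functions. -/
theorem stmt4 {H : Type} [NormedAddCommGroup H] [InnerProductSpace ℂ H] [CompleteSpace H]
    {N : ℕ} (E : PVM ℝ H) (x : Fin N → H) (M : MatrixMeasure N) [IsFiniteMeasure M.τ]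
    (hlink : ∀ δ : Set ℝ, MeasurableSet δ → ∀ i j : Fin N,
      (∫ t in δ, M.Φ t i j ∂M.τ) = (inner ℂ (x j) (E.P δ (x i)) : ℂ))
    (I J : Fin N → Finset (Set ℝ))
    (hI : ∀ j, ∀ δ ∈ I j, MeasurableSet δ) (hJ : ∀ s, ∀ δ ∈ J s, MeasurableSet δ)
    (α β : Fin N → Set ℝ → ℂ) :
    M.pairing
      (fun t j => ∑ δ ∈ I j, α j δ * Set.indicator δ (fun _ => (1 : ℂ)) t)
      (fun t s => ∑ δ ∈ J s, β s δ * Set.indicator δ (fun _ => (1 : ℂ)) t)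
    = inner ℂ (∑ s : Fin N, ∑ δ' ∈ J s, β s δ' • E.P δ' (x s))
        (∑ j : Fin N, ∑ δ ∈ I j, α j δ • E.P δ (x j)) := by
  -- pointwise expansion of the integrand
  have key : ∀ t : ℝ,
      dotProduct (fun j => ∑ δ ∈ I j, α j δ * Set.indicator δ (fun _ => (1 : ℂ)) t)
        ((M.Φ t) *ᵥ (star (fun s => ∑ δ ∈ J s, β s δ * Set.indicator δ (fun _ => (1 : ℂ)) t)))
      = ∑ i, ∑ j, ∑ δ ∈ I i, ∑ δ' ∈ J j,
          (α i δ * (starRingEnd ℂ) (β j δ')) *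
            Set.indicator (δ ∩ δ') (fun t => M.Φ t i j) t := by
    intro t
    rw [dotProduct]
    refine Finset.sum_congr rfl fun i _ => ?_
    rw [Matrix.mulVec, dotProduct, Finset.mul_sum]
    refine Finset.sum_congr rfl fun j _ => ?_
    rw [Pi.star_apply, star_sum, Finset.sum_mul]
    refine Finset.sum_congr rfl fun δ hδ => ?_
    rw [Finset.mul_sum, Finset.mul_sum]
    refine Finset.sum_congr rfl fun δ' hδ' => ?_
    by_cases h1 : t ∈ δ <;> by_cases h2 : t ∈ δ' <;>
      simp [Set.indicator_of_mem, Set.indicator_of_notMem, Set.mem_inter_iff, h1, h2,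
        Complex.star_def, _root_.map_mul] <;> ring
  have hbound : ∀ (t : ℝ) (i j : Fin N), ‖M.Φ t i j‖ ≤ 1 :=
    fun t i j => entry_bound _ (M.pos t) (M.trace_one t) i j
  have hint0 : ∀ (i j : Fin N) (s : Set ℝ), MeasurableSet s →
      Integrable (fun t => Set.indicator s (fun t => M.Φ t i j) t) M.τ := by
    intro i j s hs
    refine Integrable.mono' (integrable_const (1:ℝ))
      ((M.meas i j).indicator hs).aestronglyMeasurable ?_
    filter_upwards with t
    exact le_trans (norm_indicator_le_norm_self _ t) (hbound t i j)
  have hint : ∀ (i j : Fin N) (δ δ' : Set ℝ), MeasurableSet δ → MeasurableSet δ' →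
      Integrable (fun t => (α i δ * (starRingEnd ℂ) (β j δ')) *
        Set.indicator (δ ∩ δ') (fun t => M.Φ t i j) t) M.τ :=
    fun i j δ δ' hδ hδ' => (hint0 i j _ (hδ.inter hδ')).const_mul _
  have hterm : ∀ (i j : Fin N) (δ δ' : Set ℝ), MeasurableSet δ → MeasurableSet δ' →
      (∫ t, (α i δ * (starRingEnd ℂ) (β j δ')) *
        Set.indicator (δ ∩ δ') (fun t => M.Φ t i j) t ∂M.τ)
      = (α i δ * (starRingEnd ℂ) (β j δ')) * inner ℂ (x j) (E.P (δ ∩ δ') (x i)) := by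
    intro i j δ δ' hδ hδ'
    rw [MeasureTheory.integral_const_mul, integral_indicator (hδ.inter hδ'),
      hlink _ (hδ.inter hδ') i j]
  have lhs_eq : M.pairing
      (fun t j => ∑ δ ∈ I j, α j δ * Set.indicator δ (fun _ => (1 : ℂ)) t)
      (fun t s => ∑ δ ∈ J s, β s δ * Set.indicator δ (fun _ => (1 : ℂ)) t)
      = ∑ i, ∑ j, ∑ δ ∈ I i, ∑ δ' ∈ J j,
          (α i δ * (starRingEnd ℂ) (β j δ')) * inner ℂ (x j) (E.P (δ ∩ δ') (x i)) := by
    unfold MatrixMeasure.pairing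
    rw [funext key]
    rw [integral_finset_sum _ (fun i _ => integrable_finset_sum _ (fun j _ =>
      integrable_finset_sum _ (fun δ hδ => integrable_finset_sum _ (fun δ' hδ' =>
        hint i j δ δ' (hI i δ hδ) (hJ j δ' hδ')))))]
    refine Finset.sum_congr rfl fun i _ => ?_
    rw [integral_finset_sum _ (fun j _ => integrable_finset_sum _ (fun δ hδ =>
      integrable_finset_sum _ (fun δ' hδ' => hint i j δ δ' (hI i δ hδ) (hJ j δ' hδ'))))]
    refine Finset.sum_congr rfl fun j _ => ?_
    rw [integral_finset_sum _ (fun δ hδ => integrable_finset_sum _ (fun δ' hδ' =>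
      hint i j δ δ' (hI i δ hδ) (hJ j δ' hδ')))]
    refine Finset.sum_congr rfl fun δ hδ => ?_
    rw [integral_finset_sum _ (fun δ' hδ' => hint i j δ δ' (hI i δ hδ) (hJ j δ' hδ'))]
    exact Finset.sum_congr rfl fun δ' hδ' => hterm i j δ δ' (hI i δ hδ) (hJ j δ' hδ')
  have rhs_eq : (inner ℂ (∑ s : Fin N, ∑ δ' ∈ J s, β s δ' • E.P δ' (x s))
        (∑ j : Fin N, ∑ δ ∈ I j, α j δ • E.P δ (x j)) : ℂ)
      = ∑ j, ∑ δ ∈ I j, α j δ * ∑ s, ∑ δ' ∈ J s,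
          (starRingEnd ℂ) (β s δ') * inner ℂ (x s) (E.P (δ' ∩ δ) (x j)) := by
    simp only [sum_inner, inner_sum, inner_smul_left, inner_smul_right]
    refine Finset.sum_congr rfl fun j _ => Finset.sum_congr rfl fun δ hδ => ?_
    congr 1
    refine Finset.sum_congr rfl fun s _ => Finset.sum_congr rfl fun δ' hδ' => ?_
    congr 1
    rw [E.inter' δ' δ (hJ s δ' hδ') (hI j δ hδ), ContinuousLinearMap.comp_apply,
      ← (E.selfAdjoint' δ' (hJ s δ' hδ')).adjoint_eq, ContinuousLinearMap.adjoint_inner_left,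
      (E.selfAdjoint' δ' (hJ s δ' hδ')).adjoint_eq]
  rw [lhs_eq, rhs_eq]
  refine Finset.sum_congr rfl fun i _ => ?_
  rw [Finset.sum_comm]
  refine Finset.sum_congr rfl fun δ hδ => ?_
  rw [Finset.mul_sum]
  refine Finset.sum_congr rfl fun j _ => ?_
  rw [Finset.mul_sum]
  refine Finset.sum_congr rfl fun δ' hδ' => ?_
  rw [Set.inter_comm δ δ']
  ring
end

section
/- Let H be a Hilbert space with a sequence {x_{m,n}}_{m∈ℤ_+, n∈ℤ} of total span satisfying (x_{m,n}, x_{k,l})_H = s_{m+k, n−l} for a fixed doubly-indexed complex sequence s. Then the linear operator B_0 defined on Lin{x_{m,n}} by B_0 x_{m,n} = x_{m,n+1} is well defined and isometric: ‖B_0 y‖ = ‖y‖ for all y ∈ D(B_0); its closure B is a unitary operator on H. -/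
open Complex

/-- Let `{x_{m,n}}_{m∈ℤ_+, n∈ℤ}` have total span in `H` with
`(x_{m,n}, x_{k,l}) = s_{m+k, n-l}` (in Mathlib's convention
`⟪x_{k,l}, x_{m,n}⟫ = s_{m+k, n-l}`).  Then `B₀ x_{m,n} = x_{m,n+1}` is well defined
and isometric on `Lin{x_{m,n}}`, and its closure is a unitary operator on `H`. -/
theorem stmt13 {H : Type} [NormedAddCommGroup H] [InnerProductSpace ℂ H] [CompleteSpace H]
    (x : ℕ → ℤ → H) (s : ℕ → ℤ → ℂ)
    (hgram : ∀ (m k : ℕ) (n l : ℤ),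
      (inner ℂ (x k l) (x m n) : ℂ) = s (m + k) (n - l))
    (hdense : closure (Submodule.span ℂ
      {y : H | ∃ (m : ℕ) (n : ℤ), y = x m n} : Set H) = Set.univ) :
    (∀ c : ℕ × ℤ →₀ ℂ,
      (∑ p ∈ c.support, c p • x p.1 p.2) = 0 →
      (∑ p ∈ c.support, c p • x p.1 (p.2 + 1)) = 0) ∧
    (∀ c : ℕ × ℤ →₀ ℂ,
      ‖∑ p ∈ c.support, c p • x p.1 (p.2 + 1)‖ = ‖∑ p ∈ c.support, c p • x p.1 p.2‖) ∧
    (∃ B : H ≃ₗᵢ[ℂ] H, ∀ (m : ℕ) (n : ℤ), B (x m n) = x m (n + 1)) := by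
  classical
  set F : (ℕ × ℤ →₀ ℂ) →ₗ[ℂ] H := Finsupp.linearCombination ℂ (fun p : ℕ × ℤ => x p.1 p.2) with hF
  set G : (ℕ × ℤ →₀ ℂ) →ₗ[ℂ] H := Finsupp.linearCombination ℂ (fun p : ℕ × ℤ => x p.1 (p.2 + 1)) with hG
  have hFapp : ∀ c : ℕ × ℤ →₀ ℂ, F c = ∑ p ∈ c.support, c p • x p.1 p.2 := by
    intro c; simp [hF, Finsupp.linearCombination_apply, Finsupp.sum]
  have hGapp : ∀ c : ℕ × ℤ →₀ ℂ, G c = ∑ p ∈ c.support, c p • x p.1 (p.2 + 1) := by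
    intro c; simp [hG, Finsupp.linearCombination_apply, Finsupp.sum]
  -- inner product preservation
  have key : ∀ c d : ℕ × ℤ →₀ ℂ, (inner ℂ (G c) (G d) : ℂ) = inner ℂ (F c) (F d) := by
    intro c d
    rw [hFapp, hFapp, hGapp, hGapp, sum_inner, sum_inner]
    refine Finset.sum_congr rfl fun p _ => ?_
    rw [inner_sum, inner_sum]
    refine Finset.sum_congr rfl fun q _ => ?_
    rw [inner_smul_left, inner_smul_left, inner_smul_right, inner_smul_right,
      hgram q.1 p.1 (q.2 + 1) (p.2 + 1), hgram q.1 p.1 q.2 p.2]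
    ring_nf
  have hnorm : ∀ c : ℕ × ℤ →₀ ℂ, ‖G c‖ = ‖F c‖ := by
    intro c
    have h1 : ‖G c‖ ^ 2 = ‖F c‖ ^ 2 := by
      rw [← @inner_self_eq_norm_sq ℂ, ← @inner_self_eq_norm_sq ℂ, key]
    calc ‖G c‖ = Real.sqrt (‖G c‖ ^ 2) := (Real.sqrt_sq (norm_nonneg _)).symm
      _ = Real.sqrt (‖F c‖ ^ 2) := by rw [h1]
      _ = ‖F c‖ := Real.sqrt_sq (norm_nonneg _)
  have hrange : (LinearMap.range F : Set H) =
      (Submodule.span ℂ {y : H | ∃ (m : ℕ) (n : ℤ), y = x m n} : Set H) := by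
    have hr0 : Set.range (fun p : ℕ × ℤ => x p.1 p.2) = {y : H | ∃ m n, y = x m n} := by
      ext y
      constructor
      · rintro ⟨p, rfl⟩; exact ⟨p.1, p.2, rfl⟩
      · rintro ⟨m, n, rfl⟩; exact ⟨(m, n), rfl⟩
    rw [hF, Finsupp.range_linearCombination, hr0]
  have hdense' : Dense (LinearMap.range F : Set H) := by
    rw [hrange, dense_iff_closure_eq, hdense]
  -- the induced map on the range of F
  have hKG : LinearMap.ker F ≤ LinearMap.ker G := by
    intro c hc
    rw [LinearMap.mem_ker] at hc ⊢
    have := hnorm c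
    rw [hc, norm_zero] at this
    exact norm_eq_zero.mp this
  set g : ((ℕ × ℤ →₀ ℂ) ⧸ LinearMap.ker F) →ₗ[ℂ] H := (LinearMap.ker F).liftQ G hKG with hg
  set e := F.quotKerEquivRange with he
  set B0 : LinearMap.range F →ₗ[ℂ] H := g ∘ₗ (e.symm : LinearMap.range F →ₗ[ℂ] _) with hB0
  have hB0app : ∀ c : ℕ × ℤ →₀ ℂ, ∀ h, B0 ⟨F c, h⟩ = G c := by
    intro c h
    have h1 : e (Submodule.Quotient.mk c) = ⟨F c, h⟩ := by
      ext; exact F.quotKerEquivRange_apply_mk c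
    rw [hB0]
    simp only [LinearMap.coe_comp, Function.comp_apply, LinearEquiv.coe_coe, ← h1,
      LinearEquiv.symm_apply_apply]
    rfl
  have hB0iso : ∀ y : LinearMap.range F, ‖B0 y‖ = ‖y‖ := by
    rintro ⟨y, c, rfl⟩
    rw [hB0app c ⟨c, rfl⟩, hnorm]
    rfl
  set LI : LinearMap.range F →ₗᵢ[ℂ] H := ⟨B0, hB0iso⟩ with hLI
  -- extend to all of H
  set j : (LinearMap.range F : Submodule ℂ H) →L[ℂ] H := (LinearMap.range F).subtypeL with hj
  have hjd : DenseRange j := by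
    exact hdense'.denseRange_val
  have hji : IsUniformInducing j := isUniformEmbedding_subtype_val.isUniformInducing
  set h : H →L[ℂ] H := ContinuousLinearMap.extend LI.toContinuousLinearMap j with hh
  have hext : ∀ y : LinearMap.range F, h y = B0 y := fun y =>
    ContinuousLinearMap.extend_eq (f := LI.toContinuousLinearMap) hjd hji y
  have hiso : ∀ z : H, ‖h z‖ = ‖z‖ := by
    have : Set.EqOn (fun z => ‖h z‖) (fun z => ‖z‖) (LinearMap.range F : Set H) := by
      rintro z hz
      simp only
      rw [hext ⟨z, hz⟩, hB0iso]
      rfl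
    have heq := Continuous.ext_on hdense' (by fun_prop) (by fun_prop) this
    exact fun z => congrFun heq z
  set LI2 : H →ₗᵢ[ℂ] H := ⟨h, hiso⟩ with hLI2
  have hgen : ∀ (m : ℕ) (n : ℤ), LI2 (x m n) = x m (n + 1) := by
    intro m n
    have hx : x m n ∈ LinearMap.range F :=
      ⟨Finsupp.single (m, n) 1, by simp [hF]⟩
    have h2 : B0 ⟨x m n, hx⟩ = x m (n + 1) := by
      have h3 : F (Finsupp.single (m, n) 1) = x m n := by simp [hF]
      have h4 : (⟨x m n, hx⟩ : LinearMap.range F) = ⟨F (Finsupp.single (m, n) 1), LinearMap.mem_range_self F _⟩ := by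
        ext; exact h3.symm
      rw [h4, hB0app]
      simp [hG]
    have : LI2 (x m n) = h ((⟨x m n, hx⟩ : LinearMap.range F) : H) := rfl
    rw [this, hext ⟨x m n, hx⟩, h2]
  -- surjectivity
  have hsurj : Function.Surjective LI2 := by
    have hclosed : IsClosed (Set.range LI2) :=
      (LI2.isometry.isClosedEmbedding).isClosed_range
    have hsub : (Submodule.span ℂ {y : H | ∃ (m : ℕ) (n : ℤ), y = x m n} : Set H)
        ⊆ Set.range LI2 := by
      have : Submodule.span ℂ {y : H | ∃ (m : ℕ) (n : ℤ), y = x m n} ≤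
          LinearMap.range LI2.toLinearMap := by
        rw [Submodule.span_le]
        rintro y ⟨m, n, rfl⟩
        refine ⟨x m (n - 1), ?_⟩
        show LI2 (x m (n - 1)) = x m n
        rw [hgen]
        norm_num
      exact this
    have : Set.range LI2 = Set.univ := by
      apply Set.eq_univ_of_univ_subset
      rw [← hdense]
      calc closure (Submodule.span ℂ {y : H | ∃ (m : ℕ) (n : ℤ), y = x m n} : Set H)
          ⊆ closure (Set.range LI2) := closure_mono hsub
        _ = Set.range LI2 := hclosed.closure_eq
    exact Set.range_eq_univ.mp this
  refine ⟨?_, ?_, ⟨LinearIsometryEquiv.ofSurjective LI2 hsurj, fun m n => hgen m n⟩⟩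
  · intro c hc
    rw [← hFapp] at hc
    rw [← hGapp]
    have := hnorm c
    rw [hc, norm_zero] at this
    exact norm_eq_zero.mp this
  · intro c
    rw [← hFapp, ← hGapp]
    exact hnorm c
end
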